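/- (Zavist–Tideman characterization.) Let A be a finite set of alternatives, let P be a profile of strict total orders on A, and let w be its weighted majority margin. Let R be a strict total order on A. Then R is the output ranking of the ranked pairs procedure on P under some tiebreaking order if and only if for every pair of alternatives i,j ∈ A with i ≻_R j, there exists a directed path from i to j in the graph G_R whose minimum edge weight (under w) is at least w(j,i). -/

import Mathlib

/-!
Ranked pairs skips an edge exactly when it would close a cycle. So if `i ≻ j` in the output and
`(j, i)` is an edge, it was skipped, and the edges locked in before it, all of weight at least
`w(j,i)`, already lead from `i` to `j`; if `(j, i)` is not an edge, `w(j,i) < 0` and any path of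
locked-in edges works. Conversely, given such paths, order the edges by weight and break ties in
favour of the edges of `R`: every edge against `R` is then preceded by a path of `R`-edges closing
it off, so the procedure locks in precisely the nonnegative edges of `R`, whose transitive closure
is `R` again by the hypothesis.
-/

/-- `u` reaches `v`: there is a nonempty directed path from `u` to `v` using edges in `E`. -/
def reaches {A : Type*} (E : Set (A × A)) (u v : A) : Prop :=
  Relation.TransGen (fun a b => (a, b) ∈ E) u v

/-- A digraph (with edge set `E`) is acyclic if no vertex reaches itself. -/
def Acyclic {A : Type*} (E : Set (A × A)) : Prop := ∀ v, ¬ reaches E v v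

open Classical in
/-- The weighted majority margin of the profile `P`:
(number of votes ranking `a` above `b`) − (number of votes ranking `b` above `a`). -/
noncomputable def margin {A : Type*} (P : List (A → A → Prop)) (a b : A) : ℤ :=
  (P.countP (fun v => decide (v a b)) : ℤ) - (P.countP (fun v => decide (v b a)) : ℤ)

open Classical in
/-- Greedy insertion (the locking-in step of ranked pairs): process the edges of the
list in order, locking in each edge if and only if the resulting graph is still acyclic. -/
noncomputable def greedy {A : Type*} (E : Set (A × A)) : List (A × A) → Set (A × A)
  | [] => E
  | e :: rest => greedy (if Acyclic (insert e E) then insert e E else E) rest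

open Relation

section Greedy

variable {A : Type*}

lemma reaches_mono {E E' : Set (A × A)} (h : E ⊆ E') {u v : A} (huv : reaches E u v) :
    reaches E' u v :=
  TransGen.mono (fun _ _ hab => h hab) _ _ huv

lemma rel_of_reaches {R : A → A → Prop} [IsTrans A R] {E : Set (A × A)}
    (hE : ∀ e ∈ E, R e.1 e.2) {u v : A} (huv : reaches E u v) : R u v :=
  transGen_eq_self (r := R) ▸ TransGen.mono (fun a b hab => hE (a, b) hab) _ _ huv

lemma acyclic_empty : Acyclic (∅ : Set (A × A)) :=
  fun _ h => by obtain ⟨_, h, _⟩ := TransGen.head'_iff.mp h; exact h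

lemma acyclic_of_forall_rel {R : A → A → Prop} [IsTrans A R] [Std.Irrefl R] {E : Set (A × A)}
    (hE : ∀ e ∈ E, R e.1 e.2) : Acyclic E :=
  fun v hv => Std.Irrefl.irrefl v (rel_of_reaches hE hv)

lemma reaches_insert {S : Set (A × A)} {a b u v : A} (h : reaches (insert (a, b) S) u v) :
    reaches S u v ∨
      (ReflTransGen (fun x y => (x, y) ∈ S) u a ∧ ReflTransGen (fun x y => (x, y) ∈ S) b v) := by
  induction h with
  | single hstep =>
    rcases hstep with hab | hS
    · obtain ⟨rfl, rfl⟩ := Prod.mk.inj hab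
      exact .inr ⟨.refl, .refl⟩
    · exact .inl (.single hS)
  | tail _ hstep ih =>
    rcases hstep with hab | hS
    · obtain ⟨rfl, rfl⟩ := Prod.mk.inj hab
      rcases ih with h | ⟨hua, -⟩
      · exact .inr ⟨h.to_reflTransGen, .refl⟩
      · exact .inr ⟨hua, .refl⟩
    · rcases ih with h | ⟨hua, hbc⟩
      · exact .inl (h.tail hS)
      · exact .inr ⟨hua, hbc.tail hS⟩

lemma acyclic_insert_iff {S : Set (A × A)} (hS : Acyclic S) {a b : A} (hab : a ≠ b) :
    Acyclic (insert (a, b) S) ↔ ¬ reaches S b a := by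
  refine ⟨fun h hba => h a (.head (Set.mem_insert _ _) (reaches_mono (Set.subset_insert _ _) hba)),
    fun hba v hv => ?_⟩
  rcases reaches_insert hv with hvv | ⟨hva, hbv⟩
  · exact hS v hvv
  · rcases reflTransGen_iff_eq_or_transGen.mp (hbv.trans hva) with rfl | h
    · exact hab rfl
    · exact hba h

open Classical in
lemma greedy_cons (E : Set (A × A)) (e : A × A) (l : List (A × A)) :
    greedy E (e :: l) = greedy (if Acyclic (insert e E) then insert e E else E) l := rfl

lemma greedy_append (E : Set (A × A)) (l₁ l₂ : List (A × A)) :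
    greedy E (l₁ ++ l₂) = greedy (greedy E l₁) l₂ := by
  induction l₁ generalizing E with
  | nil => rfl
  | cons e l ih => exact ih _

lemma subset_greedy (E : Set (A × A)) (l : List (A × A)) : E ⊆ greedy E l := by
  induction l generalizing E with
  | nil => exact subset_rfl
  | cons e l ih =>
    rw [greedy_cons]
    split_ifs
    · exact (Set.subset_insert _ _).trans (ih _)
    · exact ih _

lemma greedy_subset (E : Set (A × A)) (l : List (A × A)) : greedy E l ⊆ E ∪ {e | e ∈ l} := by
  induction l generalizing E with
  | nil => exact Set.subset_union_left
  | cons e l ih =>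
    rw [greedy_cons]
    refine (ih _).trans ?_
    split_ifs
    · rintro f ((rfl | hf) | hf) <;> simp_all
    · rintro f (hf | hf) <;> simp_all

lemma acyclic_greedy {E : Set (A × A)} (hE : Acyclic E) (l : List (A × A)) :
    Acyclic (greedy E l) := by
  induction l generalizing E with
  | nil => exact hE
  | cons e l ih =>
    rw [greedy_cons]
    split_ifs with h
    · exact ih h
    · exact ih hE

lemma reaches_greedy_of_not_mem {E : Set (A × A)} (hE : Acyclic E) {a b : A} (hab : a ≠ b)
    {l₁ l₂ : List (A × A)} (h : (a, b) ∉ greedy E (l₁ ++ (a, b) :: l₂)) :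
    reaches (greedy E l₁) b a := by
  rw [← not_not (a := reaches _ b a), ← acyclic_insert_iff (acyclic_greedy hE l₁) hab]
  intro hac
  rw [greedy_append, greedy_cons, if_pos hac] at h
  exact h (subset_greedy _ _ (Set.mem_insert _ _))

lemma greedy_eq_union_setOf_rel {R : A → A → Prop} [IsTrans A R] [Std.Irrefl R]
    {E : Set (A × A)} (hE : ∀ e ∈ E, R e.1 e.2) {l : List (A × A)}
    (hl : ∀ l₁ e l₂, l = l₁ ++ e :: l₂ → ¬ R e.1 e.2 →
      reaches (E ∪ {f | f ∈ l₁ ∧ R f.1 f.2}) e.2 e.1) :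
    greedy E l = E ∪ {f | f ∈ l ∧ R f.1 f.2} := by
  induction l generalizing E with
  | nil => simp [greedy]
  | cons e l ih =>
    have hl' : ∀ l₁ f l₂, l = l₁ ++ f :: l₂ → ¬ R f.1 f.2 →
        reaches (E ∪ {g | g ∈ e :: l₁ ∧ R g.1 g.2}) f.2 f.1 :=
      fun l₁ f l₂ h => hl (e :: l₁) f l₂ (by rw [h]; rfl)
    rw [greedy_cons]
    by_cases he : R e.1 e.2
    · have hE' : ∀ f ∈ insert e E, R f.1 f.2 := by
        rintro f (rfl | hf)
        exacts [he, hE f hf]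
      have hunion : ∀ l' : List (A × A), E ∪ {g | g ∈ e :: l' ∧ R g.1 g.2} =
          insert e E ∪ {g | g ∈ l' ∧ R g.1 g.2} := fun l' => by
        ext g; by_cases hg : g = e <;> simp_all
      rw [if_pos (acyclic_of_forall_rel hE'),
        ih hE' (fun l₁ f l₂ h hf => hunion l₁ ▸ hl' l₁ f l₂ h hf), hunion]
    · have hunion : ∀ l' : List (A × A), E ∪ {g | g ∈ e :: l' ∧ R g.1 g.2} =
          E ∪ {g | g ∈ l' ∧ R g.1 g.2} := fun l' => by
        ext g; by_cases hg : g = e <;> simp_all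
      have hcycle : reaches E e.2 e.1 := by
        simpa using hl [] e l rfl he
      have hne : e.1 ≠ e.2 := fun h => acyclic_of_forall_rel hE e.1 (h ▸ hcycle)
      rw [if_neg ((acyclic_insert_iff (acyclic_of_forall_rel hE) hne).not_left.mpr hcycle),
        ih hE (fun l₁ f l₂ h hf => hunion l₁ ▸ hl' l₁ f l₂ h hf), hunion]

end Greedy

lemma Finset.exists_list_pairwise_key_ge {α β : Type*} [LinearOrder β] (s : Finset α)
    (key : α → β) :
    ∃ L : List α, L.Nodup ∧ (∀ x, x ∈ L ↔ x ∈ s) ∧ L.Pairwise (fun x y => key y ≤ key x) := by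
  refine ⟨s.toList.mergeSort (fun x y => decide (key y ≤ key x)),
    List.nodup_mergeSort.mpr s.nodup_toList, fun x => by simp, ?_⟩
  have hsorted := List.pairwise_mergeSort (le := fun x y => decide (key y ≤ key x))
    (fun x y z hxy hyz => by simp only [decide_eq_true_eq] at *; exact hyz.trans hxy)
    (fun x y => by simpa only [Bool.or_eq_true, decide_eq_true_eq] using le_total _ _) s.toList
  exact hsorted.imp (of_decide_eq_true ·)

section RankedPairs

variable {A : Type*} {w : A → A → ℤ} {R : A → A → Prop}

lemma reaches_of_greedy_ranking [Std.Asymm R] {L : List (A × A)}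
    (hL : ∀ e, e ∈ L ↔ e.1 ≠ e.2 ∧ 0 ≤ w e.1 e.2)
    (hsort : L.Pairwise (fun e f => w f.1 f.2 ≤ w e.1 e.2))
    (hout : ∀ a b, R a b ↔ reaches (greedy ∅ L) a b) {i j : A} (hij : R i j) :
    reaches {e | R e.1 e.2 ∧ 0 ≤ w e.1 e.2 ∧ w j i ≤ w e.1 e.2} i j := by
  have hlocked : ∀ e ∈ greedy ∅ L, R e.1 e.2 ∧ 0 ≤ w e.1 e.2 := fun e he =>
    ⟨(hout _ _).mpr (.single he), ((hL e).mp (by simpa using greedy_subset ∅ L he)).2⟩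
  by_cases hji : (j, i) ∈ L
  · obtain ⟨l₁, l₂, rfl⟩ := List.append_of_mem hji
    have hskip : (j, i) ∉ greedy ∅ (l₁ ++ (j, i) :: l₂) :=
      fun h => Std.Asymm.asymm _ _ hij ((hout j i).mpr (.single h))
    refine reaches_mono (fun e he => ?_)
      (reaches_greedy_of_not_mem acyclic_empty (ne_of_irrefl hij).symm hskip)
    have he₁ : e ∈ l₁ := by simpa using greedy_subset ∅ l₁ he
    obtain ⟨hRe, hwe⟩ := hlocked e (by rw [greedy_append]; exact subset_greedy _ _ he)
    exact ⟨hRe, hwe, (List.pairwise_append.mp hsort).2.2 e he₁ (j, i) List.mem_cons_self⟩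
  · have hw : w j i < 0 := by
      simpa [(ne_of_irrefl hij).symm] using mt (hL (j, i)).mpr hji
    refine reaches_mono (fun e he => ?_) ((hout i j).mp hij)
    obtain ⟨hRe, hwe⟩ := hlocked e he
    exact ⟨hRe, hwe, by omega⟩

lemma exists_greedy_ranking_of_reaches [Fintype A] [IsStrictTotalOrder A R]
    (hpath : ∀ i j, R i j → reaches {e | R e.1 e.2 ∧ 0 ≤ w e.1 e.2 ∧ w j i ≤ w e.1 e.2} i j) :
    ∃ L : List (A × A), L.Nodup ∧ (∀ e, e ∈ L ↔ e.1 ≠ e.2 ∧ 0 ≤ w e.1 e.2) ∧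
      L.Pairwise (fun e f => w f.1 f.2 ≤ w e.1 e.2) ∧
      ∀ a b, R a b ↔ reaches (greedy ∅ L) a b := by
  classical
  -- Doubling the weights leaves room to break ties in favour of the edges of `R`.
  obtain ⟨L, hnd, hmem, hsort⟩ :=
    (Finset.univ.filter fun e : A × A => e.1 ≠ e.2 ∧ 0 ≤ w e.1 e.2).exists_list_pairwise_key_ge
      (fun e => 2 * w e.1 e.2 + if R e.1 e.2 then 1 else 0)
  have hL : ∀ e, e ∈ L ↔ e.1 ≠ e.2 ∧ 0 ≤ w e.1 e.2 := by simpa using hmem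
  have hlocked : greedy ∅ L = {f | f ∈ L ∧ R f.1 f.2} := by
    refine (greedy_eq_union_setOf_rel (fun _ h => h.elim) fun l₁ e l₂ hsplit he => ?_).trans
      (Set.empty_union _)
    have heL : e ∈ L := by simp [hsplit]
    have hRe : R e.2 e.1 :=
      ((trichotomous e.1 e.2).resolve_left he).resolve_left ((hL e).mp heL).1
    refine reaches_mono ?_ (hpath _ _ hRe)
    rintro f ⟨hRf, hwf, hwef⟩
    refine .inr ⟨?_, hRf⟩
    have hfL : f ∈ L := (hL f).mpr ⟨ne_of_irrefl hRf, hwf⟩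
    rw [hsplit] at hfL hsort
    rcases List.mem_append.mp hfL with hf | hf
    · exact hf
    rcases List.mem_cons.mp hf with rfl | hf
    · exact absurd hRf he
    · have := (List.pairwise_cons.mp (List.pairwise_append.mp hsort).2.1).1 f hf
      simp only [if_pos hRf, if_neg he] at this
      omega
  refine ⟨L, hnd, hL, hsort.imp fun {_ _} h => by split_ifs at h <;> omega, fun a b => ?_⟩
  rw [hlocked]
  refine ⟨fun hab => reaches_mono ?_ (hpath a b hab), rel_of_reaches fun _ hf => hf.2⟩
  rintro f ⟨hRf, hwf, -⟩
  exact ⟨(hL f).mpr ⟨ne_of_irrefl hRf, hwf⟩, hRf⟩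

end RankedPairs

theorem stmt_11_general {A : Type*} [Fintype A]
    (P : List (A → A → Prop))
    (R : A → A → Prop) (hR : IsStrictTotalOrder A R) :
    (∃ L : List (A × A), L.Nodup ∧
        (∀ e : A × A, e ∈ L ↔ (e.1 ≠ e.2 ∧ 0 ≤ margin P e.1 e.2)) ∧
        (∀ i j : Fin L.length, i < j →
          margin P (L.get j).1 (L.get j).2 ≤ margin P (L.get i).1 (L.get i).2) ∧
        (∀ a b : A, R a b ↔ reaches (greedy (∅ : Set (A × A)) L) a b)) ↔
    (∀ i j : A, R i j →
      reaches {e : A × A | R e.1 e.2 ∧ 0 ≤ margin P e.1 e.2 ∧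
        margin P j i ≤ margin P e.1 e.2} i j) := by
  have := hR
  constructor
  · rintro ⟨L, -, hL, hsort, hout⟩ i j hij
    exact reaches_of_greedy_ranking hL (List.pairwise_iff_get.mpr hsort) hout hij
  · intro hpath
    obtain ⟨L, hnd, hL, hsort, hout⟩ := exists_greedy_ranking_of_reaches hpath
    exact ⟨L, hnd, hL, List.pairwise_iff_get.mp hsort, hout⟩

/-- Zavist–Tideman characterization: `R` is the output ranking of ranked pairs on `P`
under some tiebreaking order iff for all `i ≻_R j` there is a path from `i` to `j` in
`G_R` whose minimum edge weight is at least `w(j,i)`. -/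
theorem stmt_11 {A : Type*} [Fintype A] [DecidableEq A]
    (P : List (A → A → Prop)) (hP : ∀ v ∈ P, IsStrictTotalOrder A v)
    (R : A → A → Prop) (hR : IsStrictTotalOrder A R) :
    (∃ L : List (A × A), L.Nodup ∧
        (∀ e : A × A, e ∈ L ↔ (e.1 ≠ e.2 ∧ 0 ≤ margin P e.1 e.2)) ∧
        (∀ i j : Fin L.length, i < j →
          margin P (L.get j).1 (L.get j).2 ≤ margin P (L.get i).1 (L.get i).2) ∧
        (∀ a b : A, R a b ↔ reaches (greedy (∅ : Set (A × A)) L) a b)) ↔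
    (∀ i j : A, R i j →
      reaches {e : A × A | R e.1 e.2 ∧ 0 ≤ margin P e.1 e.2 ∧
        margin P j i ≤ margin P e.1 e.2} i j) :=
  stmt_11_general P R hR
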